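/- Approximation Lemma. Let N ≥ 1 and let H be a cone of nonempty compact convex subsets of ℝ^N, i.e., a family closed under Minkowski addition and multiplication by nonnegative scalars. Let H* denote the dual cone consisting of all finite signed Borel measures μ on the unit sphere S_{N−1} such that ∫_{S_{N−1}} h_K dμ ≥ 0 for every K ∈ H. Then every μ ∈ H* is the limit, in the weak* topology of the dual space of C(S_{N−1}), of a sequence of finitely supported signed measures belonging to H*. -/

import Mathlib

open MeasureTheory Filter Topology Pointwise

/-- The support function of `K ⊆ ℝ^N`. -/
noncomputable def suppFn {N : ℕ} (K : Set (EuclideanSpace ℝ (Fin N)))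
    (x : EuclideanSpace ℝ (Fin N)) : ℝ :=
  sSup ((fun y => (inner ℝ x y : ℝ)) '' K)

/-- The integral of a function against a finite signed Borel measure, via the
Jordan decomposition.  This realizes the identification of finite signed Borel
measures with continuous linear functionals on `C(S_{N-1})`. -/
noncomputable def sintegral {α : Type*} [MeasurableSpace α]
    (μ : SignedMeasure α) (f : α → ℝ) : ℝ :=
  ∫ a, f a ∂μ.toJordanDecomposition.posPart -
    ∫ a, f a ∂μ.toJordanDecomposition.negPart

/-- A signed measure is finitely supported if it is a finite linear combination
of Dirac measures. -/
def FinitelySupported {α : Type*} [MeasurableSpace α]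
    (μ : SignedMeasure α) : Prop :=
  ∃ (m : ℕ) (c : Fin m → ℝ) (pts : Fin m → α),
    μ = ∑ k, c k • (Measure.dirac (pts k)).toSignedMeasure

/-!
Discretise `μ` by the Riemann sum `∑ μ(Aᵢ) δ_{vᵢ}` over a measurable partition of the sphere
into pieces `Aᵢ` within `δ` of their tags `vᵢ`, and repair positivity with two corrections of
size `O(δ ‖μ‖)`.
For `s ∈ K`, `h_K = ⟪·, s⟫ + h_{K - s}`, and `g = h_{K - s}` is nonnegative, `R`-Lipschitz and
reaches `R` on the sphere, where `R` is the radius of `K - s` about `0`. A dipole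
`‖b‖/2 (δ_d - δ_{-d})` makes the first moment exact, so linear functions are integrated exactly;
the symmetric mass `c ∑ⱼ (δ_{uⱼ} + δ_{-uⱼ})` over a fixed `1/2`-net is invisible to linear
functions but gives at least `c R / 2` on `g`, which for `c = 4 δ ‖μ‖` absorbs the `O(δ ‖μ‖ R)`
errors of the Riemann sum and of the dipole. Letting `δ → 0` gives weak* convergence.
-/

open scoped NNReal RealInnerProductSpace
open Metric Set Function

lemma MeasureTheory.SignedMeasure.eq_posPart_sub_negPart {α : Type*} [MeasurableSpace α]
    (σ : SignedMeasure α) :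
    σ = σ.toJordanDecomposition.posPart.toSignedMeasure
      - σ.toJordanDecomposition.negPart.toSignedMeasure :=
  σ.toSignedMeasure_toJordanDecomposition.symm

section SignedIntegral

variable {α : Type*} [TopologicalSpace α] [CompactSpace α] [MeasurableSpace α]
  [OpensMeasurableSpace α] {f g : α → ℝ}

lemma Continuous.integrable_of_compactSpace {V : Type*} [NormedAddCommGroup V] {f : α → V}
    (hf : Continuous f) (P : Measure α) [IsFiniteMeasure P] : Integrable f P :=
  hf.integrable_of_hasCompactSupport (.of_compactSpace f)

lemma sintegral_eq_integral_sub_integral {σ : SignedMeasure α} {P Q : Measure α}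
    [IsFiniteMeasure P] [IsFiniteMeasure Q] (h : σ = P.toSignedMeasure - Q.toSignedMeasure)
    (hf : Continuous f) : sintegral σ f = ∫ a, f a ∂P - ∫ a, f a ∂Q := by
  have hPQ : P + σ.toJordanDecomposition.negPart = Q + σ.toJordanDecomposition.posPart := by
    rw [← Measure.toSignedMeasure_eq_toSignedMeasure_iff, Measure.toSignedMeasure_add,
      Measure.toSignedMeasure_add, add_comm Q.toSignedMeasure, ← sub_eq_sub_iff_add_eq_add, ← h]
    exact SignedMeasure.eq_posPart_sub_negPart σ
  have := congrArg (fun ν : Measure α => ∫ a, f a ∂ν) hPQ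
  simp only [integral_add_measure (hf.integrable_of_compactSpace _)
    (hf.integrable_of_compactSpace _)] at this
  rw [sintegral]
  linarith

lemma sintegral_add (σ : SignedMeasure α) (hf : Continuous f) (hg : Continuous g) :
    sintegral σ (fun a => f a + g a) = sintegral σ f + sintegral σ g := by
  simp only [sintegral]
  rw [integral_add (hf.integrable_of_compactSpace _) (hg.integrable_of_compactSpace _),
    integral_add (hf.integrable_of_compactSpace _) (hg.integrable_of_compactSpace _)]
  ring

lemma sintegral_add_measure (σ τ : SignedMeasure α) (hf : Continuous f) :
    sintegral (σ + τ) f = sintegral σ f + sintegral τ f := by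
  have hστ : σ + τ
      = (σ.toJordanDecomposition.posPart + τ.toJordanDecomposition.posPart).toSignedMeasure
        - (σ.toJordanDecomposition.negPart + τ.toJordanDecomposition.negPart).toSignedMeasure := by
    rw [Measure.toSignedMeasure_add, Measure.toSignedMeasure_add,
      congrArg₂ (· + ·) (SignedMeasure.eq_posPart_sub_negPart σ)
        (SignedMeasure.eq_posPart_sub_negPart τ)]
    abel
  rw [sintegral_eq_integral_sub_integral hστ hf,
    integral_add_measure (hf.integrable_of_compactSpace _) (hf.integrable_of_compactSpace _),
    integral_add_measure (hf.integrable_of_compactSpace _) (hf.integrable_of_compactSpace _)]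
  simp only [sintegral]
  ring

lemma sintegral_smul_measure (σ : SignedMeasure α) (r : ℝ) (hf : Continuous f) :
    sintegral (r • σ) f = r * sintegral σ f := by
  set pos := σ.toJordanDecomposition.posPart
  set neg := σ.toJordanDecomposition.negPart
  -- write `r = a - b` with `a, b ≥ 0` to stay within positive measures
  set a := r.toNNReal
  set b := (-r).toNNReal
  have hab : (a : ℝ) - b = r := by
    simp [a, b, Real.coe_toNNReal', max_zero_sub_max_neg_zero_eq_self]
  have hrσ : r • σ = (a • pos + b • neg).toSignedMeasure - (b • pos + a • neg).toSignedMeasure := by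
    rw [← hab, congrArg (_ • ·) (SignedMeasure.eq_posPart_sub_negPart σ),
      Measure.toSignedMeasure_add, Measure.toSignedMeasure_add, Measure.toSignedMeasure_smul, Measure.toSignedMeasure_smul,
      Measure.toSignedMeasure_smul, Measure.toSignedMeasure_smul, NNReal.smul_def,
      NNReal.smul_def, NNReal.smul_def, NNReal.smul_def]
    module
  have hsmul : ∀ (c : ℝ≥0) (P : Measure α), ∫ x, f x ∂(c • P) = c * ∫ x, f x ∂P := fun c P => by
    rw [integral_smul_nnreal_measure, NNReal.smul_def, smul_eq_mul]
  rw [sintegral_eq_integral_sub_integral hrσ hf,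
    integral_add_measure (hf.integrable_of_compactSpace _) (hf.integrable_of_compactSpace _),
    integral_add_measure (hf.integrable_of_compactSpace _) (hf.integrable_of_compactSpace _),
    hsmul, hsmul, hsmul, hsmul, ← hab]
  simp only [sintegral]
  ring

lemma sintegral_sub_measure (σ τ : SignedMeasure α) (hf : Continuous f) :
    sintegral (σ - τ) f = sintegral σ f - sintegral τ f :=
  map_sub (AddMonoidHom.mk' (sintegral · f) fun _ _ => sintegral_add_measure _ _ hf) σ τ

lemma sintegral_finset_sum_measure {ι : Type*} (s : Finset ι) (σ : ι → SignedMeasure α)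
    (hf : Continuous f) : sintegral (∑ i ∈ s, σ i) f = ∑ i ∈ s, sintegral (σ i) f :=
  map_sum (AddMonoidHom.mk' (sintegral · f) fun _ _ => sintegral_add_measure _ _ hf) σ s

lemma sintegral_dirac (x : α) (hf : Continuous f) :
    sintegral (Measure.dirac x).toSignedMeasure f = f x := by
  rw [sintegral_eq_integral_sub_integral (P := Measure.dirac x) (Q := 0) (by simp) hf,
    integral_dirac' _ _ hf.stronglyMeasurable, integral_zero_measure, sub_zero]

end SignedIntegral

lemma finitelySupported_of_mem_span {α : Type*} [MeasurableSpace α] {σ : SignedMeasure α}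
    (h : σ ∈ Submodule.span ℝ (range fun x : α => (Measure.dirac x).toSignedMeasure)) :
    FinitelySupported σ := by
  obtain ⟨c, rfl⟩ := Finsupp.mem_span_range_iff_exists_finsupp.1 h
  refine ⟨c.support.card, fun k => c (c.support.equivFin.symm k),
    fun k => c.support.equivFin.symm k, ?_⟩
  rw [Finsupp.sum, ← Finset.sum_coe_sort, ← c.support.equivFin.symm.sum_comp]

structure IsTaggedPartition {ι α : Type*} [PseudoMetricSpace α] [MeasurableSpace α]
    (A : ι → Set α) (v : ι → α) (δ : ℝ) : Prop where
  measurableSet : ∀ i, MeasurableSet (A i)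
  pairwise_disjoint : Pairwise (Disjoint on A)
  iUnion_eq : ⋃ i, A i = univ
  dist_lt : ∀ i, ∀ x ∈ A i, dist x (v i) < δ

lemma exists_isTaggedPartition {α : Type*} [PseudoMetricSpace α] [MeasurableSpace α]
    [CompactSpace α] [OpensMeasurableSpace α] {δ : ℝ} (hδ : 0 < δ) :
    ∃ (m : ℕ) (A : Fin m → Set α) (v : Fin m → α), IsTaggedPartition A v δ := by
  obtain ⟨t, -, ht, hcover⟩ := finite_cover_balls_of_compact (isCompact_univ (X := α)) hδ
  let v : Fin ht.toFinset.card → α := fun i => ht.toFinset.equivFin.symm i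
  refine ⟨_, disjointed fun i => ball (v i) δ, v,
    ⟨fun i => disjointedRec (fun _ _ h => h.diff measurableSet_ball) measurableSet_ball,
      disjoint_disjointed _, ?_, fun i x hx => disjointed_subset _ i hx⟩⟩
  refine iUnion_disjointed.trans (eq_univ_of_forall fun x => ?_)
  obtain ⟨y, hy, hxy⟩ := mem_iUnion₂.1 (hcover (mem_univ x))
  exact mem_iUnion.2 ⟨ht.toFinset.equivFin ⟨y, ht.mem_toFinset.2 hy⟩, by simpa [v] using hxy⟩

namespace IsTaggedPartition

variable {ι α : Type*} [PseudoMetricSpace α] [MeasurableSpace α] {A : ι → Set α} {v : ι → α}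
  {δ ε : ℝ} {f : α → ℝ}

lemma exists_dist_lt (hA : IsTaggedPartition A v δ) (x : α) : ∃ i, dist x (v i) < δ := by
  obtain ⟨i, hi⟩ := mem_iUnion.1 (hA.iUnion_eq ▸ mem_univ x)
  exact ⟨i, hA.dist_lt i x hi⟩

variable [Fintype ι] [CompactSpace α] [OpensMeasurableSpace α]

lemma abs_sum_mul_sub_integral_le (hA : IsTaggedPartition A v δ) (P : Measure α)
    [IsFiniteMeasure P] (hf : Continuous f)
    (hfε : ∀ x y, dist x y < δ → dist (f x) (f y) ≤ ε) :
    |∑ i, P.real (A i) * f (v i) - ∫ x, f x ∂P| ≤ ε * P.real univ := by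
  have hint : ∫ x, f x ∂P = ∑ i, ∫ x in A i, f x ∂P := by
    rw [← setIntegral_univ, ← hA.iUnion_eq]
    exact integral_iUnion_fintype hA.measurableSet hA.pairwise_disjoint
      fun i => (hf.integrable_of_compactSpace P).integrableOn
  rw [hint, ← hA.iUnion_eq, measureReal_iUnion_fintype hA.pairwise_disjoint hA.measurableSet,
    Finset.mul_sum, ← Finset.sum_sub_distrib]
  refine (Finset.abs_sum_le_sum_abs _ _).trans (Finset.sum_le_sum fun i _ => ?_)
  rw [← Real.norm_eq_abs, ← smul_eq_mul, ← setIntegral_const,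
    ← integral_sub (integrable_const _) (hf.integrable_of_compactSpace _)]
  exact norm_setIntegral_le_of_norm_le_const (measure_lt_top _ _) fun x hx => by
    rw [← dist_eq_norm, dist_comm]
    exact hfε x (v i) (hA.dist_lt i x hx)

lemma abs_sum_mul_sub_sintegral_le (hA : IsTaggedPartition A v δ) (μ : SignedMeasure α)
    (hf : Continuous f)
    (hfε : ∀ x y, dist x y < δ → dist (f x) (f y) ≤ ε) :
    |∑ i, μ (A i) * f (v i) - sintegral μ f| ≤ ε * μ.totalVariation.real univ := by
  set pos := μ.toJordanDecomposition.posPart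
  set neg := μ.toJordanDecomposition.negPart
  have hμA : ∀ i, μ (A i) = pos.real (A i) - neg.real (A i) := fun i => by
    conv_lhs => rw [SignedMeasure.eq_posPart_sub_negPart μ]
    exact Measure.toSignedMeasure_sub_apply (hA.measurableSet i)
  have hsplit : ∑ i, μ (A i) * f (v i) - sintegral μ f
      = (∑ i, pos.real (A i) * f (v i) - ∫ x, f x ∂pos)
        - (∑ i, neg.real (A i) * f (v i) - ∫ x, f x ∂neg) := by
    simp only [hμA, sub_mul, Finset.sum_sub_distrib, sintegral, pos, neg]
    ring
  rw [hsplit, SignedMeasure.totalVariation, measureReal_add_apply, mul_add]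
  exact (abs_sub _ _).trans (add_le_add (hA.abs_sum_mul_sub_integral_le pos hf hfε)
    (hA.abs_sum_mul_sub_integral_le neg hf hfε))

end IsTaggedPartition

section Sphere

variable {E : Type*} [NormedAddCommGroup E]

local notation "𝕊" => sphere (0 : E) 1

lemma sphere_dist_le_two (x y : 𝕊) : dist x y ≤ 2 := by
  rw [Subtype.dist_eq]
  refine (dist_le_norm_add_norm _ _).trans_eq ?_
  rw [norm_eq_of_mem_sphere, norm_eq_of_mem_sphere]
  norm_num

variable [InnerProductSpace ℝ E]

lemma exists_mem_sphere_norm_smul_eq [Nontrivial E] (b : E) : ∃ d : 𝕊, ‖b‖ • (d : E) = b := by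
  by_cases hb : b = 0
  · obtain ⟨d, hd⟩ := (NormedSpace.sphere_nonempty (x := (0 : E))).2 zero_le_one
    exact ⟨⟨d, hd⟩, by simp [hb]⟩
  · refine ⟨⟨‖b‖⁻¹ • b, mem_sphere_zero_iff_norm.2 (norm_smul_inv_norm hb)⟩, ?_⟩
    exact smul_inv_smul₀ (norm_ne_zero_iff.2 hb) b

variable [MeasurableSpace E] (μ : SignedMeasure (sphere (0 : E) 1)) {ι κ : Type*} [Fintype ι]
  [Fintype κ]

noncomputable def firstMoment : E :=
  ∫ x, (x : E) ∂μ.toJordanDecomposition.posPart - ∫ x, (x : E) ∂μ.toJordanDecomposition.negPart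

noncomputable def momentDefect (A : ι → Set 𝕊) (v : ι → 𝕊) : E :=
  ∑ i, μ (A i) • (v i : E) - firstMoment μ

noncomputable def approximant (A : ι → Set 𝕊) (v : ι → 𝕊) (d : 𝕊) (u : κ → 𝕊) (c : ℝ) :
    SignedMeasure 𝕊 :=
  ∑ i, μ (A i) • (Measure.dirac (v i)).toSignedMeasure
    + (‖momentDefect μ A v‖ / 2) •
      ((Measure.dirac d).toSignedMeasure - (Measure.dirac (-d)).toSignedMeasure)
    + c • ∑ j, ((Measure.dirac (u j)).toSignedMeasure + (Measure.dirac (-u j)).toSignedMeasure)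

variable {A : ι → Set (sphere (0 : E) 1)} {v : ι → sphere (0 : E) 1} {d : sphere (0 : E) 1}
  {u : κ → sphere (0 : E) 1} {c δ : ℝ}

lemma finitelySupported_approximant : FinitelySupported (approximant μ A v d u c) := by
  refine finitelySupported_of_mem_span ?_
  have hdirac : ∀ x : 𝕊, (Measure.dirac x).toSignedMeasure ∈
      Submodule.span ℝ (range fun x : 𝕊 => (Measure.dirac x).toSignedMeasure) :=
    fun x => Submodule.subset_span ⟨x, rfl⟩
  exact add_mem (add_mem (sum_mem fun i _ => Submodule.smul_mem _ _ (hdirac _))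
    (Submodule.smul_mem _ _ (sub_mem (hdirac _) (hdirac _))))
    (Submodule.smul_mem _ _ (sum_mem fun j _ => add_mem (hdirac _) (hdirac _)))

variable [FiniteDimensional ℝ E] [BorelSpace E]

lemma sintegral_inner_eq_inner_firstMoment (s : E) :
    sintegral μ (fun x => ⟪(x : E), s⟫) = ⟪firstMoment μ, s⟫ := by
  simp_rw [sintegral, firstMoment, inner_sub_left, real_inner_comm s,
    integral_inner (continuous_subtype_val.integrable_of_compactSpace _)]

lemma IsTaggedPartition.norm_momentDefect_le (hA : IsTaggedPartition A v δ) (hδ : 0 ≤ δ) :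
    ‖momentDefect μ A v‖ ≤ δ * μ.totalVariation.real univ := by
  set b := momentDefect μ A v
  have hb : ∀ x y : 𝕊, dist x y < δ → dist ⟪(x : E), b⟫ ⟪(y : E), b⟫ ≤ δ * ‖b‖ := by
    intro x y hxy
    rw [Real.dist_eq, ← inner_sub_left]
    refine (abs_real_inner_le_norm _ _).trans (mul_le_mul_of_nonneg_right ?_ (norm_nonneg b))
    rw [← dist_eq_norm, ← Subtype.dist_eq]
    exact hxy.le
  have hriemann := hA.abs_sum_mul_sub_sintegral_le μ
    (continuous_subtype_val.inner continuous_const) hb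
  -- `‖b‖²` is the Riemann-sum error of the linear function `⟪·, b⟫`
  have hbb : ‖b‖ ^ 2 = ∑ i, μ (A i) * ⟪(v i : E), b⟫ - sintegral μ (fun x => ⟪(x : E), b⟫) := by
    rw [sintegral_inner_eq_inner_firstMoment, ← real_inner_self_eq_norm_sq]
    simp only [b, momentDefect, inner_sub_left, sum_inner, real_inner_smul_left]
  rw [← hbb, abs_of_nonneg (sq_nonneg _)] at hriemann
  rcases (norm_nonneg b).eq_or_lt with hb0 | hbpos
  · rw [← hb0]
    exact mul_nonneg hδ measureReal_nonneg
  · exact le_of_mul_le_mul_left (by linarith) hbpos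

lemma sintegral_approximant {f : 𝕊 → ℝ} (hf : Continuous f) :
    sintegral (approximant μ A v d u c) f = ∑ i, μ (A i) * f (v i)
      + ‖momentDefect μ A v‖ / 2 * (f d - f (-d)) + c * ∑ j, (f (u j) + f (-u j)) := by
  simp only [approximant, sintegral_add_measure _ _ hf, sintegral_smul_measure _ _ hf,
    sintegral_sub_measure _ _ hf, sintegral_finset_sum_measure _ _ hf, sintegral_dirac _ hf]

lemma sintegral_approximant_inner (hd : ‖momentDefect μ A v‖ • (d : E) = -momentDefect μ A v)
    (s : E) :
    sintegral (approximant μ A v d u c) (fun x => ⟪(x : E), s⟫)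
      = sintegral μ (fun x => ⟪(x : E), s⟫) := by
  have hsum : ∑ i, μ (A i) * ⟪(v i : E), s⟫ = ⟪∑ i, μ (A i) • (v i : E), s⟫ := by
    simp only [sum_inner, real_inner_smul_left]
  have hdipole : ‖momentDefect μ A v‖ * ⟪(d : E), s⟫
      = ⟪firstMoment μ, s⟫ - ⟪∑ i, μ (A i) • (v i : E), s⟫ := by
    rw [← real_inner_smul_left, hd, inner_neg_left, momentDefect, inner_sub_left]
    ring
  rw [sintegral_approximant μ (continuous_subtype_val.inner continuous_const),
    sintegral_inner_eq_inner_firstMoment]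
  simp only [coe_neg_sphere, inner_neg_left, add_neg_cancel, Finset.sum_const_zero, mul_zero,
    add_zero]
  linear_combination hsum + hdipole

lemma IsTaggedPartition.sintegral_le_sintegral_approximant (hA : IsTaggedPartition A v δ)
    (hδ : 0 ≤ δ) (hu : ∀ x, ∃ j, dist x (u j) < 1 / 2) {g : 𝕊 → ℝ} {R : ℝ≥0}
    (hg0 : ∀ x, 0 ≤ g x) (hgR : LipschitzWith R g) (hpeak : ∃ x₀, (R : ℝ) ≤ g x₀) :
    sintegral μ g ≤ sintegral (approximant μ A v d u (4 * δ * μ.totalVariation.real univ)) g := by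
  rw [sintegral_approximant μ hgR.continuous]
  set M := μ.totalVariation.real univ
  set b := momentDefect μ A v
  have hM : 0 ≤ M := measureReal_nonneg
  have hriemann : |∑ i, μ (A i) * g (v i) - sintegral μ g| ≤ R * δ * M :=
    hA.abs_sum_mul_sub_sintegral_le μ hgR.continuous fun x y hxy =>
      (hgR.dist_le_mul x y).trans (mul_le_mul_of_nonneg_left hxy.le R.2)
  have hdipole : -(R * δ * M) ≤ ‖b‖ / 2 * (g d - g (-d)) := by
    have hosc : |g d - g (-d)| ≤ R * 2 := by
      rw [← Real.dist_eq]
      exact (hgR.dist_le_mul _ _).trans (mul_le_mul_of_nonneg_left (sphere_dist_le_two _ _) R.2)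
    have hb : ‖b‖ ≤ δ * M := hA.norm_momentDefect_le μ hδ
    nlinarith [mul_nonneg (norm_nonneg b) (neg_le_iff_add_nonneg.1 (abs_le.1 hosc).1),
      mul_nonneg (sub_nonneg.2 hb) R.2]
  have hsym : (R : ℝ) / 2 ≤ ∑ j, (g (u j) + g (-u j)) := by
    obtain ⟨x₀, hx₀⟩ := hpeak
    obtain ⟨j, hj⟩ := hu x₀
    have hgj : g x₀ - g (u j) ≤ R * dist x₀ (u j) :=
      (le_abs_self _).trans ((Real.dist_eq _ _).symm.trans_le (hgR.dist_le_mul x₀ (u j)))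
    calc (R : ℝ) / 2 ≤ g (u j) + g (-u j) := by nlinarith [hg0 (-u j), R.2]
      _ ≤ ∑ j, (g (u j) + g (-u j)) :=
        Finset.single_le_sum (f := fun j => g (u j) + g (-u j))
          (fun j _ => add_nonneg (hg0 _) (hg0 _)) (Finset.mem_univ j)
  nlinarith [abs_le.1 hriemann, mul_le_mul_of_nonneg_left hsym (by positivity : 0 ≤ 4 * δ * M)]

lemma IsTaggedPartition.abs_sintegral_approximant_sub_le (hA : IsTaggedPartition A v δ)
    (hδ : 0 ≤ δ) (f : C(𝕊, ℝ)) {ε : ℝ} (hf : ∀ x y, dist x y < δ → dist (f x) (f y) ≤ ε) :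
    |sintegral (approximant μ A v d u (4 * δ * μ.totalVariation.real univ)) f - sintegral μ f|
      ≤ μ.totalVariation.real univ * (ε + δ * (1 + 8 * Fintype.card κ) * ‖f‖) := by
  rw [sintegral_approximant μ f.continuous]
  set M := μ.totalVariation.real univ
  set b := momentDefect μ A v
  have hM : 0 ≤ M := measureReal_nonneg
  have hfx : ∀ x, |f x| ≤ ‖f‖ := fun x => by simpa using f.norm_coe_le_norm x
  have hriemann := hA.abs_sum_mul_sub_sintegral_le μ f.continuous hf
  have hdipole : |‖b‖ / 2 * (f d - f (-d))| ≤ δ * M * ‖f‖ := by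
    have hb : ‖b‖ ≤ δ * M := hA.norm_momentDefect_le μ hδ
    rw [abs_mul, abs_of_nonneg (by positivity)]
    calc ‖b‖ / 2 * |f d - f (-d)| ≤ ‖b‖ / 2 * (2 * ‖f‖) := by
          gcongr
          exact (abs_sub _ _).trans (by linarith [hfx d, hfx (-d)])
      _ ≤ δ * M * ‖f‖ := by nlinarith [norm_nonneg f]
  have hsym : |4 * δ * M * ∑ j, (f (u j) + f (-u j))| ≤ 8 * δ * M * Fintype.card κ * ‖f‖ := by
    rw [abs_mul, abs_of_nonneg (by positivity)]
    calc 4 * δ * M * |∑ j, (f (u j) + f (-u j))| ≤ 4 * δ * M * ∑ _j : κ, 2 * ‖f‖ := by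
          gcongr
          refine (Finset.abs_sum_le_sum_abs _ _).trans (Finset.sum_le_sum fun j _ => ?_)
          exact (abs_add_le _ _).trans (by linarith [hfx (u j), hfx (-u j)])
      _ = 8 * δ * M * Fintype.card κ * ‖f‖ := by
          rw [Finset.sum_const, Finset.card_univ, nsmul_eq_mul]
          ring
  calc _ = |(∑ i, μ (A i) * f (v i) - sintegral μ f) + ‖b‖ / 2 * (f d - f (-d))
          + 4 * δ * M * ∑ j, (f (u j) + f (-u j))| := by ring_nf
    _ ≤ ε * M + δ * M * ‖f‖ + 8 * δ * M * Fintype.card κ * ‖f‖ :=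
        (abs_add_three _ _ _).trans (add_le_add (add_le_add hriemann hdipole) hsym)
    _ = M * (ε + δ * (1 + 8 * Fintype.card κ) * ‖f‖) := by ring

theorem exists_approximants [Nontrivial E] (μ : SignedMeasure 𝕊) :
    ∃ C : ℝ, ∀ δ > 0, ∃ σ : SignedMeasure 𝕊, FinitelySupported σ ∧
      (∀ (s : E) (g : 𝕊 → ℝ) (R : ℝ≥0), (∀ x, 0 ≤ g x) → LipschitzWith R g →
        (∃ x₀, (R : ℝ) ≤ g x₀) →
        sintegral μ (fun x => ⟪(x : E), s⟫ + g x) ≤ sintegral σ (fun x => ⟪(x : E), s⟫ + g x)) ∧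
      ∀ (f : C(𝕊, ℝ)) (ε : ℝ), 0 ≤ ε → (∀ x y, dist x y < δ → dist (f x) (f y) ≤ ε) →
        |sintegral σ f - sintegral μ f| ≤ C * (ε + δ * ‖f‖) := by
  obtain ⟨p, _, u, hu⟩ := exists_isTaggedPartition (α := 𝕊) (δ := 1 / 2) (by norm_num)
  set M := μ.totalVariation.real univ
  have hM : 0 ≤ M := measureReal_nonneg
  refine ⟨M * (1 + 8 * p), fun δ hδ => ?_⟩
  obtain ⟨m, A, v, hA⟩ := exists_isTaggedPartition (α := 𝕊) hδ
  obtain ⟨d, hd⟩ := exists_mem_sphere_norm_smul_eq (-momentDefect μ A v)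
  rw [norm_neg] at hd
  have hinner (s : E) : Continuous fun x : 𝕊 => ⟪(x : E), s⟫ :=
    continuous_subtype_val.inner continuous_const
  refine ⟨approximant μ A v d u (4 * δ * M), finitelySupported_approximant μ,
    fun s g R hg0 hgR hpeak => ?_, fun f ε hε hf => ?_⟩
  · rw [sintegral_add _ (hinner s) hgR.continuous, sintegral_add _ (hinner s) hgR.continuous,
      sintegral_approximant_inner μ hd]
    exact add_le_add le_rfl
      (hA.sintegral_le_sintegral_approximant μ hδ.le hu.exists_dist_lt hg0 hgR hpeak)
  · refine (hA.abs_sintegral_approximant_sub_le μ hδ.le f hf).trans ?_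
    rw [Fintype.card_fin]
    nlinarith [mul_nonneg (mul_nonneg hM hε) (Nat.cast_nonneg p : (0 : ℝ) ≤ p)]

end Sphere

lemma tendsto_of_abs_sub_le_of_uniformContinuous {α : Type*} [PseudoMetricSpace α] {f : α → ℝ}
    (hf : UniformContinuous f) {a : ℕ → ℝ} {L C B : ℝ} {δ : ℕ → ℝ}
    (hδ : Tendsto δ atTop (𝓝 0))
    (h : ∀ n ε, 0 ≤ ε → (∀ x y, dist x y < δ n → dist (f x) (f y) ≤ ε) →
      |a n - L| ≤ C * (ε + δ n * B)) :
    Tendsto a atTop (𝓝 L) := by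
  refine Metric.tendsto_nhds.2 fun e he => ?_
  have hsmall : ∀ᶠ ε in 𝓝 (0 : ℝ), C * ε < e :=
    ((continuous_const.mul continuous_id).tendsto' 0 0 (by simp)).eventually (gt_mem_nhds he)
  obtain ⟨ε, hCε, hε⟩ := ((hsmall.filter_mono nhdsWithin_le_nhds).and
    (self_mem_nhdsWithin : ∀ᶠ ε in 𝓝[>] (0 : ℝ), 0 < ε)).exists
  obtain ⟨η, hη, hfη⟩ := Metric.uniformContinuous_iff.1 hf ε hε
  have hlim : Tendsto (fun n => C * (ε + δ n * B)) atTop (𝓝 (C * (ε + 0 * B))) :=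
    ((hδ.mul_const B).const_add ε).const_mul C
  filter_upwards [hδ.eventually (gt_mem_nhds hη),
    hlim.eventually (gt_mem_nhds (by simpa using hCε))] with n hδn hn
  rw [Real.dist_eq]
  exact (h n ε hε.le fun x y hxy => (hfη (hxy.trans hδn)).le).trans_lt hn

section SupportFunction

variable {N : ℕ} {K : Set (EuclideanSpace ℝ (Fin N))}

lemma le_suppFn (hK : IsCompact K) {y : EuclideanSpace ℝ (Fin N)} (hy : y ∈ K)
    (x : EuclideanSpace ℝ (Fin N)) : ⟪x, y⟫ ≤ suppFn K x :=
  le_csSup (hK.image (continuous_const.inner continuous_id)).bddAbove (mem_image_of_mem _ hy)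

lemma suppFn_le (hne : K.Nonempty) {x : EuclideanSpace ℝ (Fin N)} {C : ℝ}
    (h : ∀ y ∈ K, ⟪x, y⟫ ≤ C) : suppFn K x ≤ C :=
  csSup_le (hne.image _) (forall_mem_image.2 h)

lemma suppFn_lipschitzWith (hK : IsCompact K) (hne : K.Nonempty) {R : ℝ≥0}
    (hR : ∀ y ∈ K, ‖y‖ ≤ R) : LipschitzWith R (suppFn K) := by
  refine LipschitzWith.of_le_add_mul R fun x x' => suppFn_le hne fun y hy => ?_
  have hxx' : ⟪x - x', y⟫ ≤ R * dist x x' :=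
    calc ⟪x - x', y⟫ ≤ ‖x - x'‖ * ‖y‖ := real_inner_le_norm _ _
      _ ≤ dist x x' * R := by rw [dist_eq_norm]; gcongr; exact hR y hy
      _ = R * dist x x' := mul_comm _ _
  calc ⟪x, y⟫ = ⟪x', y⟫ + ⟪x - x', y⟫ := by rw [inner_sub_left]; ring
    _ ≤ suppFn K x' + R * dist x x' := add_le_add (le_suppFn hK hy x') hxx'

lemma suppFn_image_sub (hK : IsCompact K) (hne : K.Nonempty) (s x : EuclideanSpace ℝ (Fin N)) :
    suppFn ((· - s) '' K) x = suppFn K x - ⟪x, s⟫ := by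
  simp only [suppFn, image_image, inner_sub_right]
  have h := Monotone.map_csSup_of_continuousAt (continuous_sub_right ⟪x, s⟫).continuousAt
    (fun _ _ h => sub_le_sub_right h _) (hne.image fun y => ⟪x, y⟫)
    (hK.image (continuous_const.inner continuous_id)).bddAbove
  rw [image_image] at h
  exact h.symm

lemma exists_suppFn_eq_inner_add [Nontrivial (EuclideanSpace ℝ (Fin N))] (hK : IsCompact K)
    (hne : K.Nonempty) :
    ∃ (s : EuclideanSpace ℝ (Fin N)) (g : sphere (0 : EuclideanSpace ℝ (Fin N)) 1 → ℝ) (R : ℝ≥0),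
      (∀ x : sphere (0 : EuclideanSpace ℝ (Fin N)) 1,
        suppFn K x = ⟪(x : EuclideanSpace ℝ (Fin N)), s⟫ + g x) ∧
      (∀ x, 0 ≤ g x) ∧ LipschitzWith R g ∧ ∃ x₀, (R : ℝ) ≤ g x₀ := by
  obtain ⟨s, hs⟩ := hne
  set L := (· - s) '' K
  have hL : IsCompact L := hK.image (continuous_sub_right s)
  have h0L : (0 : EuclideanSpace ℝ (Fin N)) ∈ L := ⟨s, hs, sub_self s⟩
  obtain ⟨y₀, hy₀, hmax⟩ := hL.exists_isMaxOn ⟨0, h0L⟩ continuous_norm.continuousOn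
  obtain ⟨x₀, hx₀⟩ := exists_mem_sphere_norm_smul_eq y₀
  refine ⟨s, fun x => suppFn L x, ‖y₀‖₊, fun x => ?_, fun x => ?_, ?_, x₀, ?_⟩
  · show suppFn K x = ⟪(x : EuclideanSpace ℝ (Fin N)), s⟫ + suppFn ((· - s) '' K) x
    rw [suppFn_image_sub hK ⟨s, hs⟩]
    ring
  · simpa using le_suppFn hL h0L x
  · exact (suppFn_lipschitzWith hL ⟨0, h0L⟩ fun y hy =>
      (isMaxOn_iff.1 hmax y hy).trans_eq (coe_nnnorm y₀).symm).restrict _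
  · calc (‖y₀‖₊ : ℝ) = ⟪(x₀ : EuclideanSpace ℝ (Fin N)), y₀⟫ := by
          conv_rhs => rw [← hx₀]
          rw [real_inner_smul_right, real_inner_self_eq_norm_sq, norm_eq_of_mem_sphere]
          simp
      _ ≤ suppFn L x₀ := le_suppFn hL hy₀ x₀

end SupportFunction

theorem approximation_lemma_general {N : ℕ} (hN : 1 ≤ N)
    (H : Set (Set (EuclideanSpace ℝ (Fin N))))
    (hne : ∀ K ∈ H, K.Nonempty)
    (hcomp : ∀ K ∈ H, IsCompact K)
    (μ : SignedMeasure (Metric.sphere (0 : EuclideanSpace ℝ (Fin N)) 1))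
    (hμ : ∀ K ∈ H, 0 ≤ sintegral μ
      (fun u => suppFn K (u : EuclideanSpace ℝ (Fin N)))) :
    ∃ σ : ℕ → SignedMeasure (Metric.sphere (0 : EuclideanSpace ℝ (Fin N)) 1),
      (∀ n, FinitelySupported (σ n)) ∧
      (∀ n, ∀ K ∈ H, 0 ≤ sintegral (σ n)
        (fun u => suppFn K (u : EuclideanSpace ℝ (Fin N)))) ∧
      ∀ f : C(Metric.sphere (0 : EuclideanSpace ℝ (Fin N)) 1, ℝ),
        Tendsto (fun n => sintegral (σ n) f) atTop (𝓝 (sintegral μ f)) := by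
  have : Nonempty (Fin N) := ⟨⟨0, hN⟩⟩
  obtain ⟨C, hC⟩ := exists_approximants μ
  choose σ hσ using fun n : ℕ => hC (1 / ((n : ℝ) + 1)) Nat.one_div_pos_of_nat
  refine ⟨σ, fun n => (hσ n).1, fun n K hK => ?_, fun f => ?_⟩
  · obtain ⟨s, g, R, hKg, hg0, hgR, hpeak⟩ := exists_suppFn_eq_inner_add (hcomp K hK) (hne K hK)
    have hμK := hμ K hK
    simp only [hKg] at hμK ⊢
    exact hμK.trans ((hσ n).2.1 s g R hg0 hgR hpeak)
  · exact tendsto_of_abs_sub_le_of_uniformContinuous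
      (CompactSpace.uniformContinuous_of_continuous f.continuous)
      tendsto_one_div_add_atTop_nhds_zero_nat fun n ε hε hf => (hσ n).2.2 f ε hε hf

/-- **Approximation Lemma.**  Let `H` be a cone of nonempty compact convex
subsets of `ℝ^N` and let `μ` be a finite signed Borel measure on the unit
sphere such that `∫ h_K dμ ≥ 0` for every `K ∈ H`.  Then `μ` is the weak*
limit (i.e. tested against every continuous function on the sphere) of a
sequence of finitely supported signed measures with the same positivity
property. -/
theorem approximation_lemma {N : ℕ} (hN : 1 ≤ N)
    (H : Set (Set (EuclideanSpace ℝ (Fin N))))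
    (hne : ∀ K ∈ H, K.Nonempty)
    (hcomp : ∀ K ∈ H, IsCompact K)
    (hconv : ∀ K ∈ H, Convex ℝ K)
    (hadd : ∀ K ∈ H, ∀ L ∈ H, K + L ∈ H)
    (hsmul : ∀ K ∈ H, ∀ α : ℝ, 0 ≤ α → α • K ∈ H)
    (μ : SignedMeasure (Metric.sphere (0 : EuclideanSpace ℝ (Fin N)) 1))
    (hμ : ∀ K ∈ H, 0 ≤ sintegral μ
      (fun u => suppFn K (u : EuclideanSpace ℝ (Fin N)))) :
    ∃ σ : ℕ → SignedMeasure (Metric.sphere (0 : EuclideanSpace ℝ (Fin N)) 1),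
      (∀ n, FinitelySupported (σ n)) ∧
      (∀ n, ∀ K ∈ H, 0 ≤ sintegral (σ n)
        (fun u => suppFn K (u : EuclideanSpace ℝ (Fin N)))) ∧
      ∀ f : C(Metric.sphere (0 : EuclideanSpace ℝ (Fin N)) 1, ℝ),
        Tendsto (fun n => sintegral (σ n) f) atTop (𝓝 (sintegral μ f)) :=
  approximation_lemma_general hN H hne hcomp μ hμ
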